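/- arXiv:0709.0547 — 5 statements merged into one kernel-verified Lean document; each statement's English description precedes it below -/
import Mathlib

section
/- Let k ≥ 1 be an integer and for i = 1, …, s let k₁ⁱ, …, k_{nᵢ}ⁱ be integers with kⱼⁱ ≥ 2. Consider the symmetric star-shaped matrix M indexed by a central vertex σ₀ and the chain vertices σⱼⁱ, where M(σ₀,σ₀) = −k, M(σⱼⁱ,σⱼⁱ) = −kⱼⁱ, M(σ₀,σ₁ⁱ) = M(σ₁ⁱ,σ₀) = 1, M(σⱼⁱ,σ_{j+1}ⁱ) = M(σ_{j+1}ⁱ,σⱼⁱ) = 1, and all other entries zero. Then M is negative definite if and only if ∑_{i=1}^{s} 1/[k₁ⁱ, k₂ⁱ, …, k_{nᵢ}ⁱ] < k. -/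
open Matrix

/-- The continued fraction `[a₁, a₂, …, aₙ] = a₁ − 1/(a₂ − 1/(⋯ − 1/aₙ))`. -/
noncomputable def cfrac : List ℝ → ℝ
  | [] => 0
  | [a] => a
  | a :: b :: rest => a - 1 / cfrac (b :: rest)

/-!
Write a vector on the star as `x = (x₀, y¹, …, yˢ)`, with `x₀` the value at the centre and `yⁱ`
the values along the `i`-th arm. The quadratic form splits as `−k x₀² + ∑ᵢ Qᵢ(x₀, yⁱ)`, where
`Qᵢ(p, y) = yᵀ Aᵢ y + 2 p y₁` and `Aᵢ` is the tridiagonal matrix of the `i`-th arm. Completing the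
square at the first vertex of an arm reduces `Qᵢ(p, ·)` to `−c y₁² + 2 p y₁` plus the form of the
shorter arm with centre value `y₁`, where `c = [k₁ⁱ, …, k_{nᵢ}ⁱ] > 1`. By induction along the arm,
`Qᵢ(p, ·)` has maximum `p² / [k₁ⁱ, …, k_{nᵢ}ⁱ]`, and `Qᵢ(0, y) < 0` for `y ≠ 0`. Hence the form
is at most `x₀² (∑ᵢ 1/[k₁ⁱ, …, k_{nᵢ}ⁱ] − k)`, with equality attained at `x₀ = 1`.
-/

lemma cfrac_cons (a : ℝ) (l : List ℝ) : cfrac (a :: l) = a - 1 / cfrac l := by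
  cases l <;> simp [cfrac]

lemma cfrac_ofFn_succ {n : ℕ} (a : Fin (n + 1) → ℝ) :
    cfrac (List.ofFn a) = a 0 - 1 / cfrac (List.ofFn (Fin.tail a)) := by
  rw [List.ofFn_succ, cfrac_cons]
  rfl

lemma one_div_cfrac_ofFn_tail {n : ℕ} (a : Fin (n + 1) → ℝ) :
    1 / cfrac (List.ofFn (Fin.tail a)) = a 0 - cfrac (List.ofFn a) := by
  rw [cfrac_ofFn_succ]
  ring

lemma one_lt_cfrac_ofFn {n : ℕ} (a : Fin (n + 1) → ℝ) (ha : ∀ j, 2 ≤ a j) :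
    1 < cfrac (List.ofFn a) := by
  induction n with
  | zero => simpa [cfrac] using (by linarith [ha 0] : (1 : ℝ) < a 0)
  | succ n ih =>
    have htail := ih (Fin.tail a) fun j => ha j.succ
    have : 1 / cfrac (List.ofFn (Fin.tail a)) < 1 := (div_lt_one (by linarith)).2 htail
    rw [cfrac_ofFn_succ]
    linarith [ha 0]

lemma sum_mul_ite_eq_mul_sum_ite {ι R : Type*} [CommSemiring R] (s : Finset ι) (p : ι → Prop)
    [DecidablePred p] (f : ι → R) (c : R) :
    ∑ j ∈ s, f j * (if p j then c else 0) = c * ∑ j ∈ s, if p j then f j else 0 := by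
  rw [Finset.mul_sum]
  exact Finset.sum_congr rfl fun j _ => by split_ifs <;> simp [mul_comm]

lemma neg_mul_sq_add_le_div {c : ℝ} (hc : 0 < c) (p y : ℝ) :
    -c * y ^ 2 + 2 * p * y ≤ p ^ 2 / c := by
  rw [le_div_iff₀ hc]
  nlinarith [sq_nonneg (c * y - p)]

section Chain

variable {n : ℕ}

def chainMatrix (a : Fin n → ℝ) : Matrix (Fin n) (Fin n) ℝ := fun j j' =>
  if (j : ℕ) + 1 = j' ∨ (j' : ℕ) + 1 = j then 1 else if j = j' then -a j else 0

def chainForm (a : Fin n → ℝ) (p : ℝ) (y : Fin n → ℝ) : ℝ :=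
  y ⬝ᵥ chainMatrix a *ᵥ y + 2 * p * ∑ j : Fin n, if (j : ℕ) = 0 then y j else 0

@[simp] lemma chainForm_zero (a : Fin 0 → ℝ) (p : ℝ) (y : Fin 0 → ℝ) : chainForm a p y = 0 := by
  simp [chainForm]

lemma chainMatrix_zero_zero (a : Fin (n + 1) → ℝ) : chainMatrix a 0 0 = -a 0 := by
  simp [chainMatrix]

lemma chainMatrix_zero_succ (a : Fin (n + 1) → ℝ) (j : Fin n) :
    chainMatrix a 0 j.succ = if (j : ℕ) = 0 then 1 else 0 := by
  simp [chainMatrix, (Fin.succ_ne_zero j).symm]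

lemma chainMatrix_succ_zero (a : Fin (n + 1) → ℝ) (j : Fin n) :
    chainMatrix a j.succ 0 = if (j : ℕ) = 0 then 1 else 0 := by
  simp [chainMatrix, Fin.succ_ne_zero j]

lemma chainMatrix_succ_succ (a : Fin (n + 1) → ℝ) (i j : Fin n) :
    chainMatrix a i.succ j.succ = chainMatrix (Fin.tail a) i j := by
  simp [chainMatrix, Fin.tail]

lemma chainForm_succ (a : Fin (n + 1) → ℝ) (p : ℝ) (y : Fin (n + 1) → ℝ) :
    chainForm a p y =
      -a 0 * y 0 ^ 2 + 2 * p * y 0 + chainForm (Fin.tail a) (y 0) (Fin.tail y) := by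
  simp only [chainForm, dotProduct, mulVec, Fin.sum_univ_succ, chainMatrix_zero_zero,
    chainMatrix_zero_succ, chainMatrix_succ_zero, chainMatrix_succ_succ, Fin.val_zero, Fin.val_succ,
    Nat.add_one_ne_zero, if_true, if_false, Finset.sum_const_zero, add_zero, Fin.tail, ite_mul,
    one_mul, zero_mul, mul_add, Finset.sum_add_distrib, sum_mul_ite_eq_mul_sum_ite]
  ring

lemma chainForm_le (a : Fin n → ℝ) (ha : ∀ j, 2 ≤ a j) (p : ℝ) (y : Fin n → ℝ) :
    chainForm a p y ≤ p ^ 2 / cfrac (List.ofFn a) := by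
  induction n generalizing p with
  -- `cfrac [] = 0` and `p ^ 2 / 0 = 0`, the value of the form of an empty arm.
  | zero => simp [cfrac]
  | succ n ih =>
    have hc := one_lt_cfrac_ofFn a ha
    have htail := ih (Fin.tail a) (fun j => ha j.succ) (y 0) (Fin.tail y)
    rw [div_eq_mul_one_div, one_div_cfrac_ofFn_tail] at htail
    calc chainForm a p y
        ≤ -a 0 * y 0 ^ 2 + 2 * p * y 0 + y 0 ^ 2 * (a 0 - cfrac (List.ofFn a)) := by
          rw [chainForm_succ]; gcongr
      _ = -cfrac (List.ofFn a) * y 0 ^ 2 + 2 * p * y 0 := by ring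
      _ ≤ p ^ 2 / cfrac (List.ofFn a) := neg_mul_sq_add_le_div (by linarith) p (y 0)

lemma chainForm_neg (a : Fin n → ℝ) (ha : ∀ j, 2 ≤ a j) {y : Fin n → ℝ} (hy : y ≠ 0) :
    chainForm a 0 y < 0 := by
  induction n with
  | zero => exact absurd (Subsingleton.elim y 0) hy
  | succ n ih =>
    rw [chainForm_succ, mul_zero, zero_mul, add_zero]
    by_cases hy0 : y 0 = 0
    · have htail : Fin.tail y ≠ 0 := fun h =>
        hy (funext fun j => Fin.cases hy0 (fun j => congrFun h j) j)
      simpa [hy0] using ih (Fin.tail a) (fun j => ha j.succ) htail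
    · have hc := one_lt_cfrac_ofFn a ha
      have htail := chainForm_le (Fin.tail a) (fun j => ha j.succ) (y 0) (Fin.tail y)
      rw [div_eq_mul_one_div, one_div_cfrac_ofFn_tail] at htail
      have : 0 < y 0 ^ 2 := by positivity
      nlinarith

lemma exists_chainForm_eq (a : Fin n → ℝ) (ha : ∀ j, 2 ≤ a j) (p : ℝ) :
    ∃ y, chainForm a p y = p ^ 2 / cfrac (List.ofFn a) := by
  induction n generalizing p with
  | zero => exact ⟨0, by simp [cfrac]⟩
  | succ n ih =>
    set c := cfrac (List.ofFn a)
    have hc : 1 < c := one_lt_cfrac_ofFn a ha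
    -- `p / c` maximises `-c t ^ 2 + 2 p t`.
    obtain ⟨z, hz⟩ := ih (Fin.tail a) (fun j => ha j.succ) (p / c)
    refine ⟨Fin.cons (p / c) z, ?_⟩
    rw [chainForm_succ, Fin.cons_zero, Fin.tail_cons, hz, div_eq_mul_one_div ((p / c) ^ 2),
      one_div_cfrac_ofFn_tail]
    field_simp
    ring

end Chain

section Star

variable {s : ℕ} {nn : Fin s → ℕ}

def starForm (k : ℝ) (a : (i : Fin s) → Fin (nn i) → ℝ)
    (x : Option (Σ i : Fin s, Fin (nn i)) → ℝ) : ℝ :=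
  -k * x none ^ 2 + ∑ i, chainForm (a i) (x none) fun j => x (some ⟨i, j⟩)

lemma dotProduct_mulVec_eq_starForm (k : ℝ) (a : (i : Fin s) → Fin (nn i) → ℝ)
    (M : Matrix (Option (Σ i : Fin s, Fin (nn i))) (Option (Σ i : Fin s, Fin (nn i))) ℝ)
    (hM00 : M none none = -k)
    (hM0edge : ∀ i (j : Fin (nn i)),
      M none (some ⟨i, j⟩) = (if (j : ℕ) = 0 then 1 else 0) ∧
      M (some ⟨i, j⟩) none = (if (j : ℕ) = 0 then 1 else 0))
    (hMedge : ∀ i (j j' : Fin (nn i)), M (some ⟨i, j⟩) (some ⟨i, j'⟩) = chainMatrix (a i) j j')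
    (hMoff : ∀ i i' (j : Fin (nn i)) (j' : Fin (nn i')),
      i ≠ i' → M (some ⟨i, j⟩) (some ⟨i', j'⟩) = 0)
    (x : Option (Σ i : Fin s, Fin (nn i)) → ℝ) :
    x ⬝ᵥ M *ᵥ x = starForm k a x := by
  have hrow : ∀ i (j : Fin (nn i)),
      ∑ i', ∑ j', M (some ⟨i, j⟩) (some ⟨i', j'⟩) * x (some ⟨i', j'⟩) =
        (chainMatrix (a i) *ᵥ fun j' => x (some ⟨i, j'⟩)) j := by
    intro i j
    rw [Fintype.sum_eq_single i fun i' hi' => Finset.sum_eq_zero fun j' _ => by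
      rw [hMoff i i' j j' (Ne.symm hi'), zero_mul]]
    simp only [hMedge, mulVec, dotProduct]
  simp only [starForm, chainForm, dotProduct, mulVec, Fintype.sum_option, Fintype.sum_sigma, hM00,
    hM0edge, hrow]
  simp only [ite_mul, one_mul, zero_mul, mul_add, Finset.sum_add_distrib,
    sum_mul_ite_eq_mul_sum_ite, ← Finset.mul_sum]
  ring

lemma starForm_neg {k : ℝ} {a : (i : Fin s) → Fin (nn i) → ℝ} (ha : ∀ i j, 2 ≤ a i j)
    (hsum : ∑ i, 1 / cfrac (List.ofFn (a i)) < k) {x : Option (Σ i : Fin s, Fin (nn i)) → ℝ}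
    (hx : x ≠ 0) : starForm k a x < 0 := by
  rcases eq_or_ne (x none) 0 with h0 | h0
  · obtain ⟨i, hi⟩ : ∃ i, (fun j => x (some ⟨i, j⟩)) ≠ 0 := by
      by_contra! h
      exact hx (funext fun | none => h0 | some ⟨i, j⟩ => congrFun (h i) j)
    have hle : ∀ i, chainForm (a i) 0 (fun j => x (some ⟨i, j⟩)) ≤ 0 := fun i => by
      simpa using chainForm_le (a i) (ha i) 0 fun j => x (some ⟨i, j⟩)
    rw [starForm, h0]
    simpa using Finset.sum_neg' (fun i _ => hle i)
      ⟨i, Finset.mem_univ i, chainForm_neg (a i) (ha i) hi⟩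
  · calc starForm k a x
        ≤ -k * x none ^ 2 + ∑ i, x none ^ 2 / cfrac (List.ofFn (a i)) := by
          unfold starForm
          gcongr with i
          exact chainForm_le (a i) (ha i) _ _
      _ = x none ^ 2 * (∑ i, 1 / cfrac (List.ofFn (a i)) - k) := by
          simp only [div_eq_mul_one_div (x none ^ 2), ← Finset.mul_sum]
          ring
      _ < 0 := mul_neg_of_pos_of_neg (by positivity) (by linarith)

lemma exists_starForm_eq {k : ℝ} {a : (i : Fin s) → Fin (nn i) → ℝ} (ha : ∀ i j, 2 ≤ a i j) :
    ∃ x ≠ 0, starForm k a x = ∑ i, 1 / cfrac (List.ofFn (a i)) - k := by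
  choose y hy using fun i => exists_chainForm_eq (a i) (ha i) 1
  refine ⟨fun o => o.elim 1 fun p => y p.1 p.2, fun h => one_ne_zero (congrFun h none), ?_⟩
  simp only [starForm, Option.elim, hy, one_pow]
  ring

end Star

theorem star_matrix_negDef_iff_general (k : ℤ) (s : ℕ)
    (nn : Fin s → ℕ) (kk : (i : Fin s) → Fin (nn i) → ℤ)
    (hkk : ∀ i j, 2 ≤ kk i j)
    (M : Matrix (Option (Σ i : Fin s, Fin (nn i)))
                (Option (Σ i : Fin s, Fin (nn i))) ℝ)
    (hM00 : M none none = -(k : ℝ))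
    (hM0edge : ∀ i (j : Fin (nn i)),
      M none (some ⟨i, j⟩) = (if (j : ℕ) = 0 then 1 else 0) ∧
      M (some ⟨i, j⟩) none = (if (j : ℕ) = 0 then 1 else 0))
    (hMedge : ∀ i (j j' : Fin (nn i)),
      M (some ⟨i, j⟩) (some ⟨i, j'⟩) =
        if (j : ℕ) + 1 = (j' : ℕ) ∨ (j' : ℕ) + 1 = (j : ℕ) then 1
        else if j = j' then -(kk i j : ℝ) else 0)
    (hMoff : ∀ i i' (j : Fin (nn i)) (j' : Fin (nn i')),
      i ≠ i' → M (some ⟨i, j⟩) (some ⟨i', j'⟩) = 0) :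
    (∀ x : Option (Σ i : Fin s, Fin (nn i)) → ℝ, x ≠ 0 →
        x ⬝ᵥ M.mulVec x < 0) ↔
    (∑ i : Fin s, 1 / cfrac (List.ofFn fun j => (kk i j : ℝ))) < (k : ℝ) := by
  have ha : ∀ i j, (2 : ℝ) ≤ kk i j := fun i j => mod_cast hkk i j
  have hform := dotProduct_mulVec_eq_starForm (k : ℝ) (fun i j => (kk i j : ℝ)) M hM00 hM0edge
    hMedge hMoff
  simp only [hform]
  constructor
  · intro hneg
    by_contra! hge
    obtain ⟨x, hx, hval⟩ := exists_starForm_eq (k := k) ha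
    linarith [hneg x hx]
  · exact fun hlt x hx => starForm_neg ha hlt hx

/-- The star-shaped intersection matrix, with central vertex `σ₀` of weight `−k`
and, for each `i`, a linear chain of vertices `σ₁ⁱ,…,σ_{nᵢ}ⁱ` of weights `−kⱼⁱ`,
is negative definite iff `∑ᵢ 1/[k₁ⁱ,…,k_{nᵢ}ⁱ] < k`. -/
theorem star_matrix_negDef_iff (k : ℤ) (hk : 1 ≤ k) (s : ℕ)
    (nn : Fin s → ℕ) (kk : (i : Fin s) → Fin (nn i) → ℤ)
    (hkk : ∀ i j, 2 ≤ kk i j)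
    (M : Matrix (Option (Σ i : Fin s, Fin (nn i)))
                (Option (Σ i : Fin s, Fin (nn i))) ℝ)
    (hM00 : M none none = -(k : ℝ))
    (hMdiag : ∀ i (j : Fin (nn i)), M (some ⟨i, j⟩) (some ⟨i, j⟩) = -(kk i j : ℝ))
    (hM0edge : ∀ i (j : Fin (nn i)),
      M none (some ⟨i, j⟩) = (if (j : ℕ) = 0 then 1 else 0) ∧
      M (some ⟨i, j⟩) none = (if (j : ℕ) = 0 then 1 else 0))
    (hMedge : ∀ i (j j' : Fin (nn i)),
      M (some ⟨i, j⟩) (some ⟨i, j'⟩) =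
        if (j : ℕ) + 1 = (j' : ℕ) ∨ (j' : ℕ) + 1 = (j : ℕ) then 1
        else if j = j' then -(kk i j : ℝ) else 0)
    (hMoff : ∀ i i' (j : Fin (nn i)) (j' : Fin (nn i')),
      i ≠ i' → M (some ⟨i, j⟩) (some ⟨i', j'⟩) = 0) :
    (∀ x : Option (Σ i : Fin s, Fin (nn i)) → ℝ, x ≠ 0 →
        x ⬝ᵥ M.mulVec x < 0) ↔
    (∑ i : Fin s, 1 / cfrac (List.ofFn fun j => (kk i j : ℝ))) < (k : ℝ) :=
  star_matrix_negDef_iff_general k s nn kk hkk M hM00 hM0edge hMedge hMoff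
end

section
/- Let p : 𝔻 → ℂ be a holomorphic function on the open unit disk, not identically zero, satisfying p(t₁ t₂) = p(t₁) p(t₂) for all t₁, t₂ in the punctured disk with t₁ t₂ in the disk. Then there exists a natural number q such that p(t) = t^q for all t in the disk. -/
open Metric Filter Topology

/-! Since `p` is not identically zero, it has finite order `q` at `0`, so `p z = z ^ q * g z` near
`0` with `g` analytic and `g 0 ≠ 0`. Multiplicativity passes to `g` on a punctured neighbourhood of
`0`, and letting `s → 0` in `g (t * s) = g t * g s` gives `g t = 1` there. Hence `p` agrees with
`z ↦ z ^ q` near `0`, and by the identity theorem on the whole disk. -/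

variable {𝕜 K : Type*} [NontriviallyNormedField 𝕜] [NormedField K]

lemma tendsto_const_mul_nhdsNE_zero (t : 𝕜) : Tendsto (t * ·) (𝓝[≠] 0) (𝓝 0) := by
  simpa using ((continuous_const_mul t).tendsto 0).mono_left nhdsWithin_le_nhds

lemma eventually_eq_one_of_eventually_map_mul {g : 𝕜 → K} (hg : ContinuousAt g 0)
    (hg0 : g 0 ≠ 0) (hmul : ∀ᶠ t in 𝓝[≠] 0, ∀ᶠ s in 𝓝[≠] 0, g (t * s) = g t * g s) :
    ∀ᶠ t in 𝓝[≠] 0, g t = 1 := by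
  filter_upwards [hmul] with t ht
  have hlim : Tendsto (fun s ↦ g (t * s)) (𝓝[≠] 0) (𝓝 (g t * g 0)) :=
    ((hg.tendsto.mono_left nhdsWithin_le_nhds).const_mul (g t)).congr' (ht.mono fun _ h ↦ h.symm)
  have h : g 0 = g t * g 0 :=
    tendsto_nhds_unique (hg.tendsto.comp (tendsto_const_mul_nhdsNE_zero t)) hlim
  exact mul_right_cancel₀ hg0 (by rw [← h, one_mul])

lemma eventually_eq_pow_of_eventually_map_mul {p g : 𝕜 → 𝕜} {q : ℕ} (hg : ContinuousAt g 0)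
    (hg0 : g 0 ≠ 0) (hfac : p =ᶠ[𝓝 0] fun z ↦ z ^ q * g z)
    (hmul : ∀ᶠ t in 𝓝[≠] 0, ∀ᶠ s in 𝓝[≠] 0, p (t * s) = p t * p s) :
    ∀ᶠ t in 𝓝[≠] 0, p t = t ^ q := by
  have hgmul : ∀ᶠ t in 𝓝[≠] 0, ∀ᶠ s in 𝓝[≠] 0, g (t * s) = g t * g s := by
    filter_upwards [hmul, nhdsWithin_le_nhds hfac, self_mem_nhdsWithin] with t ht hpt htne
    filter_upwards [ht, (tendsto_const_mul_nhdsNE_zero t).eventually hfac,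
      nhdsWithin_le_nhds hfac, self_mem_nhdsWithin] with s hs hpts hps hsne
    refine mul_left_cancel₀ (pow_ne_zero q (mul_ne_zero htne hsne)) ?_
    rw [← hpts, hs, hpt, hps]
    ring
  filter_upwards [eventually_eq_one_of_eventually_map_mul hg hg0 hgmul,
    nhdsWithin_le_nhds hfac] with t hgt hpt
  rw [hpt, hgt, mul_one]

/-- A holomorphic function on the unit disk, not identically zero, which is
multiplicative on the punctured disk, is `t ↦ t^q` for some natural `q`. -/
theorem multiplicative_holomorphic_is_power (p : ℂ → ℂ)
    (hol : DifferentiableOn ℂ p (ball (0 : ℂ) 1))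
    (hne : ¬ ∀ t ∈ ball (0 : ℂ) 1, p t = 0)
    (hmul : ∀ t₁ t₂ : ℂ, t₁ ∈ ball (0 : ℂ) 1 → t₁ ≠ 0 →
      t₂ ∈ ball (0 : ℂ) 1 → t₂ ≠ 0 → t₁ * t₂ ∈ ball (0 : ℂ) 1 →
      p (t₁ * t₂) = p t₁ * p t₂) :
    ∃ q : ℕ, ∀ t ∈ ball (0 : ℂ) 1, p t = t ^ q := by
  have hpa : AnalyticOnNhd ℂ p (ball 0 1) := hol.analyticOnNhd isOpen_ball
  have hconn : IsPreconnected (ball (0 : ℂ) 1) := (convex_ball 0 1).isPreconnected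
  have h0 : (0 : ℂ) ∈ ball (0 : ℂ) 1 := mem_ball_self one_pos
  have hord : analyticOrderAt p 0 ≠ ⊤ := fun h ↦
    hne (hpa.eqOn_zero_of_preconnected_of_eventuallyEq_zero hconn h0 (analyticOrderAt_eq_top.1 h))
  obtain ⟨g, hg, hg0, hfac⟩ := (hpa 0 h0).analyticOrderAt_ne_top.1 hord
  have hball : ∀ᶠ t in 𝓝[≠] (0 : ℂ), t ∈ ball (0 : ℂ) 1 ∧ t ≠ 0 :=
    Eventually.and (nhdsWithin_le_nhds (ball_mem_nhds 0 one_pos)) self_mem_nhdsWithin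
  have hmul_nhdsNE : ∀ᶠ t in 𝓝[≠] (0 : ℂ), ∀ᶠ s in 𝓝[≠] 0, p (t * s) = p t * p s := by
    filter_upwards [hball] with t ⟨ht, htne⟩
    filter_upwards [hball] with s ⟨hs, hsne⟩
    refine hmul t s ht htne hs hsne ?_
    rw [mem_ball_zero_iff] at ht hs ⊢
    rw [norm_mul]
    exact mul_lt_one_of_nonneg_of_lt_one_left (norm_nonneg t) ht hs.le
  have hpow := eventually_eq_pow_of_eventually_map_mul hg.continuousAt hg0
    (by simpa only [sub_zero, smul_eq_mul] using hfac) hmul_nhdsNE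
  exact ⟨_, fun t ht ↦ hpa.eqOn_of_preconnected_of_frequently_eq (fun _ _ ↦ analyticAt_id.pow _)
    hconn h0 hpow.frequently ht⟩
end

section
/- Let U ⊆ ℂ be a connected open set and p : 𝔻 × U → ℂ a holomorphic function such that for each x ∈ U the function t ↦ p(t,x) is not identically zero and satisfies p(t₁t₂, x) = p(t₁,x) p(t₂,x) for all t₁, t₂ in the punctured disk with t₁t₂ ∈ 𝔻. Then there exists a single natural number q, independent of x, such that p(t,x) = t^q for all (t,x) ∈ 𝔻 × U. -/
/-!
For fixed `x`, write `p(t, x) = t^q g(t)` with `g(0) ≠ 0`. Multiplicativity gives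
`g(t₁t₂) = g(t₁) g(t₂)`, and letting `t₁ → 0` forces `g ≡ 1`, so `p(t, x) = t^{q(x)}`.
The exponent is recovered continuously from the data as `q(x) = -log ‖p(e⁻¹, x)‖`, so the
`ℕ`-valued map `x ↦ q(x)` is continuous, hence constant on the connected set `U`.
-/

open Metric Filter Topology

lemma eq_one_of_map_mul_eventually {𝕜 : Type*} [NontriviallyNormedField 𝕜] {g : 𝕜 → 𝕜}
    {t : 𝕜} (hg : ContinuousAt g 0) (hg₀ : g 0 ≠ 0)
    (hmul : ∀ᶠ s in 𝓝[≠] 0, g (s * t) = g s * g t) : g t = 1 := by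
  have hlim : Tendsto g (𝓝[≠] 0) (𝓝 (g 0)) := hg.tendsto.mono_left nhdsWithin_le_nhds
  have hlim_mul : Tendsto (fun s => g (s * t)) (𝓝[≠] 0) (𝓝 (g 0)) := by
    refine hg.tendsto.comp (Tendsto.mono_left ?_ nhdsWithin_le_nhds)
    simpa using (tendsto_id (x := 𝓝 (0 : 𝕜))).mul_const t
  have : g 0 = g 0 * g t := tendsto_nhds_unique (hlim_mul.congr' hmul) (hlim.mul_const _)
  exact (mul_left_cancel₀ hg₀ (by rw [mul_one, ← this])).symm

theorem eq_pow_of_map_mul_of_differentiableOn_ball {f : ℂ → ℂ}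
    (hf : DifferentiableOn ℂ f (ball 0 1)) (hne : ¬ ∀ t ∈ ball (0 : ℂ) 1, f t = 0)
    (hmul : ∀ t₁ t₂ : ℂ, t₁ ∈ ball 0 1 → t₁ ≠ 0 → t₂ ∈ ball 0 1 → t₂ ≠ 0 →
      t₁ * t₂ ∈ ball 0 1 → f (t₁ * t₂) = f t₁ * f t₂) :
    ∃ q : ℕ, ∀ t ∈ ball (0 : ℂ) 1, f t = t ^ q := by
  have h₀ : (0 : ℂ) ∈ ball (0 : ℂ) 1 := mem_ball_self one_pos
  have hball : IsPreconnected (ball (0 : ℂ) 1) := (convex_ball 0 1).isPreconnected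
  have hf_an : AnalyticOnNhd ℂ f (ball 0 1) := hf.analyticOnNhd isOpen_ball
  have hord : analyticOrderAt f 0 ≠ ⊤ := fun h => hne fun t ht =>
    hf_an.eqOn_zero_of_preconnected_of_eventuallyEq_zero hball h₀
      (analyticOrderAt_eq_top.mp h) ht
  obtain ⟨q, hq⟩ := ENat.ne_top_iff_exists.mp hord
  obtain ⟨g, hg, hg₀, hfg⟩ := (hf_an 0 h₀).analyticOrderAt_eq_natCast.mp hq.symm
  simp only [sub_zero, smul_eq_mul] at hfg
  have hfg' : ∀ᶠ z in 𝓝 (0 : ℂ), f z = z ^ q * g z ∧ z ∈ ball (0 : ℂ) 1 :=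
    hfg.and (isOpen_ball.mem_nhds h₀)
  have hpow : ∀ᶠ t in 𝓝[≠] (0 : ℂ), f t = t ^ q := by
    filter_upwards [nhdsWithin_le_nhds hfg', self_mem_nhdsWithin] with t ⟨hft, ht⟩ (ht₀ : t ≠ 0)
    have hmul_t : Tendsto (fun s : ℂ => s * t) (𝓝 0) (𝓝 0) := by
      simpa using (tendsto_id (x := 𝓝 (0 : ℂ))).mul_const t
    suffices g t = 1 by rw [hft, this, mul_one]
    refine eq_one_of_map_mul_eventually hg.continuousAt hg₀ ?_
    filter_upwards [nhdsWithin_le_nhds hfg', nhdsWithin_le_nhds (hmul_t.eventually hfg'),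
      self_mem_nhdsWithin] with s ⟨hfs, hs⟩ ⟨hfst, hst⟩ (hs₀ : s ≠ 0)
    have h := hmul s t hs hs₀ ht ht₀ hst
    rw [hfst, hfs, hft] at h
    exact mul_left_cancel₀ (pow_ne_zero q (mul_ne_zero hs₀ ht₀)) (by linear_combination h)
  exact ⟨q, hf_an.eqOn_of_preconnected_of_frequently_eq (fun z _ => analyticAt_id.pow q)
    hball h₀ hpow.frequently⟩

lemma continuousOn_of_continuousOn_exp_neg_natCast {X : Type*} [TopologicalSpace X]
    {s : Set X} {Q : X → ℕ} (h : ContinuousOn (fun x => Real.exp (-(Q x : ℝ))) s) :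
    ContinuousOn Q s := by
  rw [Nat.isClosedEmbedding_coe_real.isInducing.continuousOn_iff]
  refine (h.log fun x _ => (Real.exp_pos _).ne').neg.congr fun x _ => ?_
  simp

theorem multiplicative_holomorphic_family_is_power_general (U : Set ℂ)
    (hUc : IsConnected U) (p : ℂ × ℂ → ℂ)
    (hol : DifferentiableOn ℂ p (ball (0 : ℂ) 1 ×ˢ U))
    (hne : ∀ x ∈ U, ¬ ∀ t ∈ ball (0 : ℂ) 1, p (t, x) = 0)
    (hmul : ∀ x ∈ U, ∀ t₁ t₂ : ℂ, t₁ ∈ ball (0 : ℂ) 1 → t₁ ≠ 0 →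
      t₂ ∈ ball (0 : ℂ) 1 → t₂ ≠ 0 → t₁ * t₂ ∈ ball (0 : ℂ) 1 →
      p (t₁ * t₂, x) = p (t₁, x) * p (t₂, x)) :
    ∃ q : ℕ, ∀ t ∈ ball (0 : ℂ) 1, ∀ x ∈ U, p (t, x) = t ^ q := by
  have hpow : ∀ x ∈ U, ∃ q : ℕ, ∀ t ∈ ball (0 : ℂ) 1, p (t, x) = t ^ q := fun x hx =>
    eq_pow_of_map_mul_of_differentiableOn_ball
      (hol.comp (differentiableOn_id.prodMk (differentiableOn_const x))
        fun t ht => Set.mk_mem_prod ht hx) (hne x hx) (hmul x hx)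
  choose! Q hQ using hpow
  set c : ℂ := (Real.exp (-1) : ℂ)
  have hc : c ∈ ball (0 : ℂ) 1 := by
    rw [mem_ball_zero_iff, Complex.norm_real, Real.norm_of_nonneg (Real.exp_pos _).le]
    exact Real.exp_lt_one_iff.mpr neg_one_lt_zero
  have hQ_cont : ContinuousOn Q U := by
    refine continuousOn_of_continuousOn_exp_neg_natCast <|
      (hol.continuousOn.comp (continuousOn_const.prodMk continuousOn_id)
        fun x hx => Set.mk_mem_prod hc hx).norm.congr fun x hx => ?_
    change _ = ‖p (c, x)‖
    rw [hQ x hx c hc, norm_pow, Complex.norm_real, Real.norm_of_nonneg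
      (Real.exp_pos _).le, ← Real.exp_nat_mul, mul_neg_one]
  obtain ⟨x₀, hx₀⟩ := hUc.nonempty
  exact ⟨Q x₀, fun t ht x hx => by rw [hQ x hx t ht, hUc.isPreconnected.constant hQ_cont hx hx₀]⟩

/-- A holomorphic function `p(t,x)` on `𝔻 × U`, `U ⊆ ℂ` open and connected,
with `t ↦ p(t,x)` multiplicative and not identically zero for each `x ∈ U`,
equals `t^q` for a single natural number `q` independent of `x`. -/
theorem multiplicative_holomorphic_family_is_power (U : Set ℂ)
    (hU : IsOpen U) (hUc : IsConnected U) (p : ℂ × ℂ → ℂ)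
    (hol : DifferentiableOn ℂ p (ball (0 : ℂ) 1 ×ˢ U))
    (hne : ∀ x ∈ U, ¬ ∀ t ∈ ball (0 : ℂ) 1, p (t, x) = 0)
    (hmul : ∀ x ∈ U, ∀ t₁ t₂ : ℂ, t₁ ∈ ball (0 : ℂ) 1 → t₁ ≠ 0 →
      t₂ ∈ ball (0 : ℂ) 1 → t₂ ≠ 0 → t₁ * t₂ ∈ ball (0 : ℂ) 1 →
      p (t₁ * t₂, x) = p (t₁, x) * p (t₂, x)) :
    ∃ q : ℕ, ∀ t ∈ ball (0 : ℂ) 1, ∀ x ∈ U, p (t, x) = t ^ q :=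
  multiplicative_holomorphic_family_is_power_general U hUc p hol hne hmul
end

section
/- Let k₁, …, kₙ be integers with kⱼ ≥ 2 and let α = [kₙ, kₙ₋₁, …, k₁] be the associated Hirzebruch–Jung continued fraction. Then there exist an integer m ≥ 1 and integers l₁, …, l_m with lⱼ ≥ 2 such that 1/α + 1/[l_m, l_{m−1}, …, l₁] = 1. -/
/-!
Continued fractions `[a₁, …, aₘ]` with integer entries `aᵢ ≥ 2` are exactly the rationals
greater than `1`: such a fraction exceeds `1` by induction, and conversely every rational `q > 1`
expands by a Euclidean algorithm that rounds up. Since `α > 1`, the dual value `α / (α - 1)` is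
again a rational greater than `1`, hence such a continued fraction, and `1/α + (α - 1)/α = 1`.
-/

/-- The continued fraction `[a₁, …, aₘ] = a₁ − 1/(a₂ − 1/(⋯ − 1/aₘ))`. -/
def cfracQ : List ℚ → ℚ
  | [] => 0
  | [a] => a
  | a :: b :: rest => a - 1 / cfracQ (b :: rest)

theorem cfracQ_cons (a : ℚ) {L : List ℚ} (hL : L ≠ []) :
    cfracQ (a :: L) = a - 1 / cfracQ L := by
  cases L with
  | nil => contradiction
  | cons b rest => rfl

theorem one_lt_cfracQ {L : List ℚ} (hL : L ≠ []) (h2 : ∀ x ∈ L, 2 ≤ x) :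
    1 < cfracQ L := by
  induction L with
  | nil => contradiction
  | cons a T ih =>
    have ha : 2 ≤ a := h2 a List.mem_cons_self
    rcases eq_or_ne T [] with rfl | hT
    · simp only [cfracQ]; linarith
    · have hT1 : 1 < cfracQ T := ih hT fun x hx => h2 x (List.mem_cons_of_mem a hx)
      have hinv : 1 / cfracQ T < 1 := (div_lt_one (by linarith)).2 hT1
      rw [cfracQ_cons a hT]
      linarith

/-- Write `p = a r - s` with `0 ≤ s < r`; then `a ≥ 2` and `p / r = a - 1 / (r / s)`, where the
fraction `r / s` has a smaller denominator. -/
theorem exists_cfracQ_eq_div (r : ℕ) (p : ℤ) (hr : 0 < r) (hrp : r < p) :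
    ∃ L : List ℤ, L ≠ [] ∧ (∀ x ∈ L, 2 ≤ x) ∧ cfracQ (L.map (↑)) = p / r := by
  induction r using Nat.strong_induction_on generalizing p with
  | _ r ih =>
  have hrQ : (r : ℚ) ≠ 0 := by positivity
  obtain ⟨a, s, hpas, hs0, hsr⟩ : ∃ a s : ℤ, p = a * r - s ∧ 0 ≤ s ∧ s < r :=
    ⟨-(-p / r), -p % r, by linarith [Int.mul_ediv_add_emod (-p) r],
      Int.emod_nonneg _ (by omega), Int.emod_lt_of_pos _ (by omega)⟩
  have ha : 2 ≤ a := by nlinarith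
  rcases hs0.eq_or_lt with rfl | hs
  · refine ⟨[a], List.cons_ne_nil _ _, by simpa using ha, ?_⟩
    simp [cfracQ, hpas, hrQ]
  · lift s to ℕ using hs0
    obtain ⟨L, hL, hL2, hLval⟩ := ih s (by omega) r (by omega) (by omega)
    refine ⟨a :: L, List.cons_ne_nil _ _, ?_, ?_⟩
    · simpa [ha] using hL2
    · rw [List.map_cons, cfracQ_cons _ (by simpa using hL), hLval, hpas]
      push_cast
      field_simp

theorem exists_cfracQ_eq {q : ℚ} (hq : 1 < q) :
    ∃ L : List ℤ, L ≠ [] ∧ (∀ x ∈ L, 2 ≤ x) ∧ cfracQ (L.map (↑)) = q := by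
  have hden : (0 : ℚ) < q.den := by positivity
  have hlt : (q.den : ℚ) < q.num := by
    rwa [← q.num_div_den, one_lt_div hden] at hq
  rw [← q.num_div_den]
  exact exists_cfracQ_eq_div q.den q.num q.den_pos (by exact_mod_cast hlt)

/-- For integers `k₁,…,kₙ ≥ 2` with `α = [kₙ, kₙ₋₁, …, k₁]`, there are integers
`l₁,…,lₘ ≥ 2`, `m ≥ 1`, with `1/α + 1/[lₘ, lₘ₋₁, …, l₁] = 1`. -/
theorem dual_continued_fraction (n : ℕ) (hn : 1 ≤ n) (k : Fin n → ℤ)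
    (hk : ∀ j, 2 ≤ k j)
    (α : ℚ) (hα : α = cfracQ ((List.ofFn fun j => (k j : ℚ)).reverse)) :
    ∃ (m : ℕ) (l : Fin m → ℤ), 1 ≤ m ∧ (∀ j, 2 ≤ l j) ∧
      1 / α + 1 / cfracQ ((List.ofFn fun j => (l j : ℚ)).reverse) = 1 := by
  have hα1 : 1 < α := by
    rw [hα]
    refine one_lt_cfracQ (by simpa [Nat.one_le_iff_ne_zero] using hn) fun x hx => ?_
    obtain ⟨j, rfl⟩ := List.mem_ofFn.1 (List.mem_reverse.1 hx)
    exact_mod_cast hk j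
  obtain ⟨M, hM, hM2, hMval⟩ := exists_cfracQ_eq (q := α / (α - 1)) (by
    rw [one_lt_div (by linarith)]; linarith)
  refine ⟨M.reverse.length, fun j => M.reverse[(j : ℕ)],
    by simpa [Nat.one_le_iff_ne_zero] using hM,
    fun j => hM2 _ (List.mem_reverse.1 (List.getElem_mem _)), ?_⟩
  simp only [List.ofFn_getElem_eq_map, List.map_reverse, List.reverse_reverse]
  rw [hMval]
  field_simp
  ring
end

section
/- Let n, m be positive integers and consider the linear vector field Z₁ = n x ∂/∂x − m y ∂/∂y on ℂ². Suppose G(x,y) = (x·u(x,y), y·v(x,y)), where u and v are holomorphic and nonvanishing on a set of the form {(x,y) : 0 < |x| < ε, |y| < ε} ∪ {(x,y) : |x| < ε, 0 <|y| < ε} minus {x = 0}, i.e. on a punctured neighborhood of 0 minus the axis {x = 0}, and suppose G preserves Z₁ (G_* Z₁ = Z₁). Then n x u_x − m y u_y = 0 and n x v_x − m y v_y = 0, and consequently u and v extend holomorphically across {x = 0}, so G extends to a biholomorphism of a neighborhood of 0 preserving Z₁. -/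
/-!
Writing `G = (x u, y v)`, the components of `G_* Z₁ - Z₁` are `x · Z₁u` and `y · Z₁v`, so
`Z₁u = 0` on `Ω`, and `Z₁v = 0` off `{y = 0}`, hence on `Ω` by continuity of the derivative.
A function killed by `Z₁` is constant along the complex-time flow `(eⁿᵗ x, e⁻ᵐᵗ y)`. With
`r = ε / 2`, the time `t = log (r / x) / n` carries `(x, y)` to `(r, e⁻ᵐᵗ y)`, and `e⁻ᵐᵗ → 0`
as `x → 0`, so `u` tends to `u (r, 0)` at every point of the axis. Setting `u = u (r, 0)` on
`{x = 0}` gives a continuous function that is holomorphic in each variable separately (in `x` by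
Riemann's removable singularity theorem), hence holomorphic by Osgood's lemma. The extended map
has derivative `diag (U 0, V 0)` at the origin, so it is injective near `0` by the inverse
function theorem.
-/

open Metric

/-- The linear vector field `Z₁ = n x ∂/∂x − m y ∂/∂y` on `ℂ²`. -/
def Zlin (n m : ℕ) (p : ℂ × ℂ) : ℂ × ℂ := ((n : ℂ) * p.1, -(m : ℂ) * p.2)

open Set Filter Topology

local notation "𝔻" ε:max => SProd.sprod (ball (0 : ℂ) ε) (ball (0 : ℂ) ε)

variable {E : Type*} [NormedAddCommGroup E] [NormedSpace ℂ E]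

theorem DifferentiableAt.fst_slice {f : ℂ × ℂ → E} {p : ℂ × ℂ} (hf : DifferentiableAt ℂ f p) :
    DifferentiableAt ℂ (fun x => f (x, p.2)) p.1 :=
  hf.comp (g := f) p.1 (differentiableAt_id.prodMk (differentiableAt_const p.2))

theorem DifferentiableAt.snd_slice {f : ℂ × ℂ → E} {p : ℂ × ℂ} (hf : DifferentiableAt ℂ f p) :
    DifferentiableAt ℂ (fun y => f (p.1, y)) p.2 :=
  hf.comp (g := f) p.2 ((differentiableAt_const p.1).prodMk differentiableAt_id)

section Osgood

variable [CompleteSpace E] {f : ℂ × ℂ → E} {S : Set (ℂ × ℂ)}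

/- As `q → p`, continuity of `f` makes the slices `f (·, q.2)` converge locally uniformly to
`f (·, p.2)`, and Weierstrass' theorem transfers this to their derivatives. -/
theorem continuousOn_deriv_fst_slice (hS : IsOpen S) (hf : ContinuousOn f S)
    (hf₁ : ∀ q ∈ S, DifferentiableAt ℂ (fun x => f (x, q.2)) q.1) :
    ContinuousOn (fun q : ℂ × ℂ => deriv (fun x => f (x, q.2)) q.1) S := by
  intro p hp
  obtain ⟨δ, hδ, hδS⟩ := Metric.isOpen_iff.1 hS p hp
  rw [← ball_prod_same] at hδS
  let F : ℂ × ℂ → ℂ → E := fun q x => f (x, q.2)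
  have hFd : ∀ᶠ q in 𝓝 p, DifferentiableOn ℂ (F q) (ball p.1 δ) := by
    filter_upwards [ball_mem_nhds p hδ] with q hq x hx
    rw [← ball_prod_same] at hq
    exact (hf₁ (x, q.2) (hδS ⟨hx, hq.2⟩)).differentiableWithinAt
  have hFu : TendstoLocallyUniformlyOn F (F p) (𝓝 p) (ball p.1 δ) := by
    rw [tendstoLocallyUniformlyOn_iff_filter]
    intro x hx
    rw [tendstoUniformlyOnFilter_iff_tendsto]
    have hfx : ContinuousAt f (x, p.2) :=
      hf.continuousAt (hS.mem_nhds (hδS ⟨hx, mem_ball_self hδ⟩))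
    refine le_trans (Tendsto.prodMk_nhds ?_ ?_) (nhds_le_uniformity (f (x, p.2)))
    · exact hfx.tendsto.comp
        ((tendsto_snd.mono_right nhdsWithin_le_nhds).prodMk_nhds tendsto_const_nhds)
    · exact hfx.tendsto.comp ((tendsto_snd.mono_right nhdsWithin_le_nhds).prodMk_nhds
        ((continuous_snd.tendsto p).comp tendsto_fst))
  have hcont : ContinuousWithinAt (deriv (F p)) (ball p.1 δ) p.1 :=
    (hFd.self_of_nhds.deriv isOpen_ball).continuousOn _ (mem_ball_self hδ)
  have hfst : Tendsto Prod.fst (𝓝 p) (𝓝[ball p.1 δ] p.1) :=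
    tendsto_nhdsWithin_iff.2 ⟨continuous_fst.tendsto p,
      continuous_fst.continuousAt.preimage_mem_nhds (ball_mem_nhds p.1 hδ)⟩
  exact ContinuousAt.continuousWithinAt
    ((hFu.deriv hFd isOpen_ball).tendsto_comp hcont (mem_ball_self hδ) hfst)

theorem continuousOn_deriv_snd_slice (hS : IsOpen S) (hf : ContinuousOn f S)
    (hf₂ : ∀ q ∈ S, DifferentiableAt ℂ (fun y => f (q.1, y)) q.2) :
    ContinuousOn (fun q : ℂ × ℂ => deriv (fun y => f (q.1, y)) q.2) S := by
  have h := continuousOn_deriv_fst_slice (f := f ∘ Prod.swap) (hS.preimage continuous_swap)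
    (hf.comp continuous_swap.continuousOn fun _ h => h) fun q hq => hf₂ q.swap hq
  exact h.comp continuous_swap.continuousOn fun q hq => by simpa using hq

open ContinuousLinearMap in
/-- Osgood's lemma. -/
theorem ContinuousOn.contDiffOn_one_of_differentiableAt_slices (hS : IsOpen S)
    (hf : ContinuousOn f S) (hf₁ : ∀ q ∈ S, DifferentiableAt ℂ (fun x => f (x, q.2)) q.1)
    (hf₂ : ∀ q ∈ S, DifferentiableAt ℂ (fun y => f (q.1, y)) q.2) : ContDiffOn ℂ 1 f S := by
  set d₁ := fun q : ℂ × ℂ => deriv (fun x => f (x, q.2)) q.1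
  set d₂ := fun q : ℂ × ℂ => deriv (fun y => f (q.1, y)) q.2
  have hd₁ := continuousOn_deriv_fst_slice hS hf hf₁
  have hd₂ := continuousOn_deriv_snd_slice hS hf hf₂
  have hderiv : ∀ q ∈ S, HasFDerivAt f
      ((toSpanSingleton ℂ (d₁ q)).coprod (toSpanSingleton ℂ (d₂ q))) q := by
    intro q hq
    have hspan := (toSpanSingletonCLE (𝕜 := ℂ) (E := E)).continuous
    refine (hasStrictFDerivAt_uncurry_coprod (f := fun x y => f (x, y))
      (f₁ := fun x y => toSpanSingleton ℂ (d₁ (x, y)))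
      (f₂ := fun x y => toSpanSingleton ℂ (d₂ (x, y))) ?_ ?_ ?_ ?_).hasFDerivAt
    · filter_upwards [hS.mem_nhds hq] with q' hq' using (hf₁ q' hq').hasDerivAt.hasFDerivAt
    · filter_upwards [hS.mem_nhds hq] with q' hq' using (hf₂ q' hq').hasDerivAt.hasFDerivAt
    · exact hspan.continuousAt.comp (hd₁.continuousAt (hS.mem_nhds hq))
    · exact hspan.continuousAt.comp (hd₂.continuousAt (hS.mem_nhds hq))
  have hcont : ContinuousOn (fderiv ℂ f) S := by
    refine continuousOn_clm_apply.2 fun v => ?_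
    refine (((continuousOn_const (c := v.1)).smul hd₁).add
      ((continuousOn_const (c := v.2)).smul hd₂)).congr fun q hq => ?_
    simp [(hderiv q hq).fderiv, d₁, d₂]
  exact (contDiffOn_succ_iff_fderiv_of_isOpen (n := 0) hS).2
    ⟨fun q hq => (hderiv q hq).differentiableAt.differentiableWithinAt, by simp,
      contDiffOn_zero.2 hcont⟩

theorem DifferentiableOn.contDiffOn_one_prod (hS : IsOpen S) (hf : DifferentiableOn ℂ f S) :
    ContDiffOn ℂ 1 f S :=
  hf.continuousOn.contDiffOn_one_of_differentiableAt_slices hS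
    (fun _ hq => (hf.differentiableAt (hS.mem_nhds hq)).fst_slice)
    (fun _ hq => (hf.differentiableAt (hS.mem_nhds hq)).snd_slice)

end Osgood

noncomputable def extendAcrossAxis {α : Type*} (w : ℂ × ℂ → α) (c : α) (p : ℂ × ℂ) : α :=
  if p.1 = 0 then c else w p

theorem extendAcrossAxis_eventuallyEq {α : Type*} {w : ℂ × ℂ → α} {c : α} {p : ℂ × ℂ}
    (hp : p.1 ≠ 0) : extendAcrossAxis w c =ᶠ[𝓝 p] w := by
  filter_upwards [(isClosed_eq continuous_fst continuous_const).isOpen_compl.mem_nhds hp]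
    with q hq using if_neg hq

section extendAcrossAxis

variable {w : ℂ × ℂ → E} {c : E} {S : Set (ℂ × ℂ)}

theorem differentiableAt_extendAcrossAxis (hS : IsOpen S)
    (hw : DifferentiableOn ℂ w (S \ {q | q.1 = 0})) {p : ℂ × ℂ} (hpS : p ∈ S) (hp : p.1 ≠ 0) :
    DifferentiableAt ℂ (extendAcrossAxis w c) p :=
  (extendAcrossAxis_eventuallyEq hp).differentiableAt_iff.2 <| hw.differentiableAt <|
    (hS.sdiff (isClosed_eq continuous_fst continuous_const)).mem_nhds ⟨hpS, hp⟩

theorem continuousOn_extendAcrossAxis (hS : IsOpen S)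
    (hw : DifferentiableOn ℂ w (S \ {q | q.1 = 0}))
    (hlim : ∀ p ∈ S, p.1 = 0 → Tendsto w (𝓝[{q | q.1 ≠ 0}] p) (𝓝 c)) :
    ∀ p ∈ S, ContinuousAt (extendAcrossAxis w c) p := by
  intro p hpS
  by_cases hp : p.1 = 0
  · rw [ContinuousAt, extendAcrossAxis, if_pos hp]
    exact (tendsto_const_nhds (x := c)).if (hlim p hpS hp)
  · exact (differentiableAt_extendAcrossAxis hS hw hpS hp).continuousAt

theorem differentiableOn_extendAcrossAxis [CompleteSpace E] (hS : IsOpen S)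
    (hw : DifferentiableOn ℂ w (S \ {q | q.1 = 0}))
    (hlim : ∀ p ∈ S, p.1 = 0 → Tendsto w (𝓝[{q | q.1 ≠ 0}] p) (𝓝 c)) :
    DifferentiableOn ℂ (extendAcrossAxis w c) S := by
  have hcont := continuousOn_extendAcrossAxis hS hw hlim
  refine (ContinuousOn.contDiffOn_one_of_differentiableAt_slices hS
    (fun p hp => (hcont p hp).continuousWithinAt) (fun p hpS => ?_)
    (fun p hpS => ?_)).differentiableOn one_ne_zero
  · by_cases hp : p.1 = 0
    · obtain ⟨δ, hδ, hδS⟩ := Metric.isOpen_iff.1 hS p hpS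
      have hslice : DifferentiableOn ℂ (fun x => extendAcrossAxis w c (x, p.2)) (ball 0 δ) := by
        refine (Complex.differentiableOn_compl_singleton_and_continuousAt_iff
          (ball_mem_nhds 0 hδ)).1 ⟨fun x hx => ?_, ?_⟩
        · have hxS : (x, p.2) ∈ S := hδS (by
            rw [← ball_prod_same, hp]; exact ⟨hx.1, mem_ball_self hδ⟩)
          exact (differentiableAt_extendAcrossAxis hS hw hxS hx.2).fst_slice.differentiableWithinAt
        · rw [show p = (0, p.2) from Prod.ext hp rfl] at hpS
          exact ContinuousAt.comp (g := extendAcrossAxis w c) (f := fun x : ℂ => (x, p.2))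
            (hcont _ hpS) (by fun_prop)
      rw [hp]
      exact hslice.differentiableAt (ball_mem_nhds 0 hδ)
    · exact (differentiableAt_extendAcrossAxis hS hw hpS hp).fst_slice
  · by_cases hp : p.1 = 0
    · simp only [extendAcrossAxis, hp, if_true]
      exact differentiableAt_const c
    · exact (differentiableAt_extendAcrossAxis hS hw hpS hp).snd_slice

theorem fderiv_extendAcrossAxis_apply_Zlin_of_fst_eq_zero {q : ℂ × ℂ} (n m : ℕ) (hq : q.1 = 0)
    (hd : DifferentiableAt ℂ (extendAcrossAxis w c) q) :
    fderiv ℂ (extendAcrossAxis w c) q (Zlin n m q) = 0 := by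
  have hslice : HasDerivAt (fun y => extendAcrossAxis w c (q.1, y))
      (fderiv ℂ (extendAcrossAxis w c) q (0, 1)) q.2 :=
    hd.hasFDerivAt.comp_hasDerivAt (f := fun y : ℂ => (q.1, y)) q.2
      ((hasDerivAt_const q.2 q.1).prodMk (hasDerivAt_id q.2))
  have hconst : HasDerivAt (fun y => extendAcrossAxis w c (q.1, y)) 0 q.2 := by
    simp only [extendAcrossAxis, hq, if_true]
    exact hasDerivAt_const _ c
  have hZ : Zlin n m q = (-(m : ℂ) * q.2) • ((0 : ℂ), (1 : ℂ)) := by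
    simp [Zlin, hq]
  rw [hZ, map_smul, hslice.unique hconst, smul_zero]

end extendAcrossAxis

theorem ContinuousLinearMap.apply_Zlin (L : ℂ × ℂ →L[ℂ] ℂ) (n m : ℕ) (p : ℂ × ℂ) :
    L (Zlin n m p) = n * p.1 * L (1, 0) - m * p.2 * L (0, 1) := by
  have : Zlin n m p = (n * p.1) • ((1 : ℂ), (0 : ℂ)) + (-m * p.2) • ((0 : ℂ), (1 : ℂ)) := by
    simp [Zlin]
  rw [this, map_add, map_smul, map_smul, smul_eq_mul, smul_eq_mul]
  ring

noncomputable def zlinFlow (n m : ℕ) (t : ℂ) (p : ℂ × ℂ) : ℂ × ℂ :=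
  (Complex.exp (n * t) * p.1, Complex.exp (-m * t) * p.2)

theorem hasDerivAt_zlinFlow (n m : ℕ) (t : ℂ) (p : ℂ × ℂ) :
    HasDerivAt (fun t => zlinFlow n m t p) (Zlin n m (zlinFlow n m t p)) t := by
  have h₁ := (((hasDerivAt_id t).const_mul (n : ℂ)).cexp).mul_const p.1
  have h₂ := (((hasDerivAt_id t).const_mul (-(m : ℂ))).cexp).mul_const p.2
  refine (h₁.prodMk h₂).congr_deriv ?_
  simp only [Zlin, zlinFlow, id, Prod.mk.injEq]
  constructor <;> ring

theorem apply_zlinFlow_eq {n m : ℕ} {w : ℂ × ℂ → E} {O : Set (ℂ × ℂ)} (hO : IsOpen O)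
    (hw : DifferentiableOn ℂ w O) (hZ : ∀ q ∈ O, fderiv ℂ w q (Zlin n m q) = 0)
    {p : ℂ × ℂ} {s : ℂ} (hs : ∀ τ ∈ Icc (0 : ℝ) 1, zlinFlow n m (τ * s) p ∈ O) :
    w (zlinFlow n m s p) = w p := by
  set g : ℝ → E := fun τ => w (zlinFlow n m (τ * s) p)
  have hg : ∀ τ ∈ Icc (0 : ℝ) 1, HasDerivAt g 0 τ := by
    intro τ hτ
    have hwτ := (hw.differentiableAt (hO.mem_nhds (hs τ hτ))).hasFDerivAt
    have := (hwτ.comp_hasDerivAt (τ : ℂ) ((hasDerivAt_zlinFlow n m (τ * s) p).scomp (τ : ℂ)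
      ((hasDerivAt_id _).mul_const s))).scomp τ Complex.ofRealCLM.hasDerivAt
    convert this using 1
    · rfl
    · rw [one_mul, map_smul, hZ _ (hs τ hτ), smul_zero, smul_zero]
  have := constant_of_has_deriv_right_zero
    (fun τ hτ => (hg τ hτ).continuousAt.continuousWithinAt)
    (fun τ hτ => (hg τ (Ico_subset_Icc_self hτ)).hasDerivWithinAt) 1 (right_mem_Icc.2 zero_le_one)
  simpa [g, zlinFlow] using this

theorem zlinFlow_log_div {n : ℕ} (m : ℕ) (hn : 0 < n) {x r : ℂ} (hx : x ≠ 0) (hr : r ≠ 0)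
    (y : ℂ) :
    zlinFlow n m (Complex.log (r / x) / n) (x, y) =
      (r, Complex.exp (-m * (Complex.log (r / x) / n)) * y) := by
  have hn' : (n : ℂ) ≠ 0 := Nat.cast_ne_zero.2 hn.ne'
  rw [zlinFlow, mul_div_cancel₀ _ hn', Complex.exp_log (div_ne_zero hr hx), div_mul_cancel₀ _ hx]

theorem norm_exp_mul_log_div (k r τ : ℝ) (x : ℂ) :
    ‖Complex.exp (k * (τ * Complex.log (r / x)))‖ = Real.exp (k * τ * Real.log ‖r / x‖) := by
  rw [Complex.norm_exp, ← mul_assoc, ← Complex.ofReal_mul, Complex.re_ofReal_mul, Complex.log_re]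

theorem zlinFlow_log_div_mem {n m : ℕ} (hn : 0 < n) {ε r : ℝ} (hr : 0 < r) (hrε : r < ε)
    {p : ℂ × ℂ} (hp : p ∈ 𝔻 ε \ {q | q.1 = 0}) (hpr : ‖p.1‖ ≤ r) {τ : ℝ} (hτ : τ ∈ Icc (0 : ℝ) 1) :
    zlinFlow n m (τ * (Complex.log (r / p.1) / n)) p ∈ 𝔻 ε \ {q | q.1 = 0} := by
  obtain ⟨⟨-, hp₂⟩, hp₁⟩ := hp
  replace hp₁ : p.1 ≠ 0 := hp₁
  have hn' : (n : ℂ) ≠ 0 := Nat.cast_ne_zero.2 hn.ne'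
  have hlog : 0 ≤ Real.log ‖(r : ℂ) / p.1‖ := by
    rw [norm_div, Complex.norm_real, Real.norm_of_nonneg hr.le]
    exact Real.log_nonneg ((one_le_div (norm_pos_iff.2 hp₁)).2 hpr)
  refine ⟨⟨?_, ?_⟩, mul_ne_zero (Complex.exp_ne_zero _) hp₁⟩
  · have : (n : ℂ) * (τ * (Complex.log (r / p.1) / n)) =
        ((1 : ℝ) : ℂ) * (τ * Complex.log (r / p.1)) := by
      push_cast; field_simp
    rw [mem_ball_zero_iff, zlinFlow, norm_mul, this, norm_exp_mul_log_div]
    calc Real.exp (1 * τ * Real.log ‖(r : ℂ) / p.1‖) * ‖p.1‖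
        ≤ Real.exp (Real.log ‖(r : ℂ) / p.1‖) * ‖p.1‖ := by
          gcongr
          nlinarith [hτ.2]
      _ = r := by
          rw [Real.exp_log (norm_pos_iff.2 (div_ne_zero (by exact_mod_cast hr.ne') hp₁)),
            norm_div, Complex.norm_real, Real.norm_of_nonneg hr.le,
            div_mul_cancel₀ _ (norm_ne_zero_iff.2 hp₁)]
      _ < ε := hrε
  · have : -(m : ℂ) * (τ * (Complex.log (r / p.1) / n)) =
        ((-(m : ℝ) / n : ℝ) : ℂ) * (τ * Complex.log (r / p.1)) := by
      push_cast; field_simp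
    rw [mem_ball_zero_iff, zlinFlow, norm_mul, this, norm_exp_mul_log_div]
    refine lt_of_le_of_lt (mul_le_of_le_one_left (norm_nonneg _) (Real.exp_le_one_iff.2 ?_))
      (mem_ball_zero_iff.1 hp₂)
    have : -(m : ℝ) / n ≤ 0 := div_nonpos_of_nonpos_of_nonneg (by simp) (by positivity)
    exact mul_nonpos_of_nonpos_of_nonneg (mul_nonpos_of_nonpos_of_nonneg this hτ.1) hlog

theorem tendsto_exp_neg_mul_log_div {n m : ℕ} (hn : 0 < n) (hm : 0 < m) {r : ℝ} (hr : 0 < r) :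
    Tendsto (fun x : ℂ => Complex.exp (-m * (Complex.log (r / x) / n))) (𝓝[≠] 0) (𝓝 0) := by
  have heq : ∀ x : ℂ, -(m : ℂ) * (Complex.log (r / x) / n) =
      ((-(m : ℝ) / n : ℝ) : ℂ) * ((1 : ℝ) * Complex.log (r / x)) := fun x => by
    push_cast; field_simp
  rw [tendsto_zero_iff_norm_tendsto_zero]
  simp_rw [heq, norm_exp_mul_log_div, mul_one, norm_div, Complex.norm_real,
    Real.norm_of_nonneg hr.le]
  have hk : -(m : ℝ) / n < 0 := div_neg_of_neg_of_pos (by simp [hm]) (by positivity)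
  refine Real.tendsto_exp_atBot.comp (Tendsto.const_mul_atTop_of_neg hk ?_)
  exact Real.tendsto_log_atTop.comp
    ((tendsto_inv_nhdsGT_zero.comp tendsto_norm_nhdsNE_zero).const_mul_atTop hr)

theorem isOpen_bidisk_diff_axis (ε : ℝ) : IsOpen (𝔻 ε \ {q | q.1 = 0}) :=
  (isOpen_ball.prod isOpen_ball).sdiff (isClosed_eq continuous_fst continuous_const)

theorem half_mem_bidisk_diff_axis {ε : ℝ} (hε : 0 < ε) :
    (((ε / 2 : ℝ) : ℂ), (0 : ℂ)) ∈ 𝔻 ε \ {q | q.1 = 0} :=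
  ⟨⟨by simpa [abs_of_pos hε] using half_lt_self hε, mem_ball_self hε⟩, by simpa using hε.ne'⟩

section Extension

variable {n m : ℕ} {ε : ℝ} {w : ℂ × ℂ → E}

theorem tendsto_of_fderiv_apply_Zlin_eq_zero (hn : 0 < n) (hm : 0 < m) (hε : 0 < ε)
    (hw : DifferentiableOn ℂ w (𝔻 ε \ {q | q.1 = 0}))
    (hZ : ∀ q ∈ 𝔻 ε \ {q | q.1 = 0}, fderiv ℂ w q (Zlin n m q) = 0) {y : ℂ}
    (hy : y ∈ ball (0 : ℂ) ε) :
    Tendsto w (𝓝[{q | q.1 ≠ 0}] (0, y)) (𝓝 (w ((ε / 2 : ℝ), 0))) := by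
  set r := ε / 2
  have hr : 0 < r := half_pos hε
  have hrε : r < ε := half_lt_self hε
  have hflow : ∀ᶠ q in 𝓝[{q : ℂ × ℂ | q.1 ≠ 0}] (0, y),
      w ((r : ℂ), Complex.exp (-m * (Complex.log (r / q.1) / n)) * q.2) = w q := by
    have hnhds : ball (0 : ℂ) r ×ˢ ball (0 : ℂ) ε ∈ 𝓝 ((0 : ℂ), y) :=
      (isOpen_ball.prod isOpen_ball).mem_nhds ⟨mem_ball_self hr, hy⟩
    filter_upwards [self_mem_nhdsWithin, nhdsWithin_le_nhds hnhds] with q hq₀ hq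
    rw [← zlinFlow_log_div m hn hq₀ (Complex.ofReal_ne_zero.2 hr.ne')]
    exact apply_zlinFlow_eq (isOpen_bidisk_diff_axis ε) hw hZ fun τ hτ =>
      zlinFlow_log_div_mem hn hr hrε ⟨⟨ball_subset_ball hrε.le hq.1, hq.2⟩, hq₀⟩
        (mem_ball_zero_iff.1 hq.1).le hτ
  have hfst : Tendsto Prod.fst (𝓝[{q : ℂ × ℂ | q.1 ≠ 0}] (0, y)) (𝓝[≠] 0) :=
    continuous_fst.continuousWithinAt.tendsto_nhdsWithin fun _ h => h
  have hlim : Tendsto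
      (fun q : ℂ × ℂ => ((r : ℂ), Complex.exp (-m * (Complex.log (r / q.1) / n)) * q.2))
      (𝓝[{q : ℂ × ℂ | q.1 ≠ 0}] (0, y)) (𝓝 ((r : ℂ), 0)) := by
    refine tendsto_const_nhds.prodMk_nhds ?_
    simpa using ((tendsto_exp_neg_mul_log_div hn hm hr).comp hfst).mul
      ((continuous_snd.tendsto ((0 : ℂ), y)).mono_left nhdsWithin_le_nhds)
  have hw_r := hw.differentiableAt
    ((isOpen_bidisk_diff_axis ε).mem_nhds (half_mem_bidisk_diff_axis hε))
  exact (hw_r.continuousAt.tendsto.comp hlim).congr' hflow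

theorem exists_extension_of_fderiv_apply_Zlin_eq_zero [CompleteSpace E] (hn : 0 < n)
    (hm : 0 < m) (hε : 0 < ε) (hw : DifferentiableOn ℂ w (𝔻 ε \ {q | q.1 = 0}))
    (hZ : ∀ q ∈ 𝔻 ε \ {q | q.1 = 0}, fderiv ℂ w q (Zlin n m q) = 0) :
    ∃ W : ℂ × ℂ → E, DifferentiableOn ℂ W (𝔻 ε) ∧ (∀ q ∈ 𝔻 ε \ {q | q.1 = 0}, W q = w q) ∧
      (∀ q ∈ 𝔻 ε, fderiv ℂ W q (Zlin n m q) = 0) ∧ ∃ q ∈ 𝔻 ε \ {q | q.1 = 0}, W 0 = w q := by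
  have hD : IsOpen (𝔻 ε) := isOpen_ball.prod isOpen_ball
  have hW := differentiableOn_extendAcrossAxis (c := w ((ε / 2 : ℝ), 0)) hD hw fun p hp hp₁ => by
    rw [show p = (0, p.2) from Prod.ext hp₁ rfl]
    exact tendsto_of_fderiv_apply_Zlin_eq_zero hn hm hε hw hZ hp.2
  refine ⟨_, hW, fun q hq => if_neg hq.2, fun q hq => ?_, _, half_mem_bidisk_diff_axis hε,
    if_pos rfl⟩
  by_cases hq₁ : q.1 = 0
  · exact fderiv_extendAcrossAxis_apply_Zlin_of_fst_eq_zero n m hq₁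
      (hW.differentiableAt (hD.mem_nhds hq))
  · rw [(extendAcrossAxis_eventuallyEq hq₁).fderiv_eq]
    exact hZ q ⟨hq, hq₁⟩

end Extension

theorem eq_of_continuousOn_of_snd_ne_zero {X : Type*} [TopologicalSpace X] [T2Space X]
    {g : ℂ × ℂ → X} {c : X} {S : Set (ℂ × ℂ)} (hS : IsOpen S) (hg : ContinuousOn g S)
    (h : ∀ q ∈ S, q.2 ≠ 0 → g q = c) : ∀ q ∈ S, g q = c := by
  intro q hq
  by_cases hq₂ : q.2 = 0
  · have hpath : Tendsto (fun t => (q.1, t)) (𝓝[≠] 0) (𝓝 q) :=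
      ((continuous_const.prodMk continuous_id).tendsto' 0 q
        (Prod.ext rfl hq₂.symm)).mono_left nhdsWithin_le_nhds
    have hc : ∀ᶠ t in 𝓝[≠] (0 : ℂ), g (q.1, t) = c := by
      filter_upwards [self_mem_nhdsWithin, hpath (hS.mem_nhds hq)] with t ht htS
      exact h _ htS ht
    exact tendsto_nhds_unique ((hg.continuousAt (hS.mem_nhds hq)).tendsto.comp hpath)
      (tendsto_const_nhds.congr' (hc.mono fun _ h => h.symm))
  · exact h q hq hq₂

section MulCoords

variable {U V : ℂ × ℂ → ℂ}

theorem fderiv_mulCoords_apply_Zlin {p : ℂ × ℂ} (hU : DifferentiableAt ℂ U p)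
    (hV : DifferentiableAt ℂ V p) (n m : ℕ) :
    fderiv ℂ (fun q : ℂ × ℂ => (q.1 * U q, q.2 * V q)) p (Zlin n m p) =
      Zlin n m (p.1 * U p, p.2 * V p) +
        (p.1 * fderiv ℂ U p (Zlin n m p), p.2 * fderiv ℂ V p (Zlin n m p)) := by
  rw [((hasFDerivAt_fst.fun_mul hU.hasFDerivAt).prodMk
    (hasFDerivAt_snd.fun_mul hV.hasFDerivAt)).fderiv]
  ext <;> simp [Zlin] <;> ring

theorem fderiv_mulCoords_apply_Zlin_eq_iff {p : ℂ × ℂ} (hU : DifferentiableAt ℂ U p)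
    (hV : DifferentiableAt ℂ V p) (n m : ℕ) :
    fderiv ℂ (fun q : ℂ × ℂ => (q.1 * U q, q.2 * V q)) p (Zlin n m p) =
        Zlin n m (p.1 * U p, p.2 * V p) ↔
      p.1 * fderiv ℂ U p (Zlin n m p) = 0 ∧ p.2 * fderiv ℂ V p (Zlin n m p) = 0 := by
  rw [fderiv_mulCoords_apply_Zlin hU hV, add_eq_left, Prod.mk_eq_zero]

theorem fderiv_apply_Zlin_eq_zero_of_preserves {S : Set (ℂ × ℂ)} (hS : IsOpen S)
    (hS₁ : ∀ p ∈ S, p.1 ≠ 0) (hU : DifferentiableOn ℂ U S) (hV : DifferentiableOn ℂ V S)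
    {n m : ℕ} (hpres : ∀ p ∈ S, fderiv ℂ (fun q : ℂ × ℂ => (q.1 * U q, q.2 * V q)) p (Zlin n m p) =
      Zlin n m (p.1 * U p, p.2 * V p)) :
    (∀ p ∈ S, fderiv ℂ U p (Zlin n m p) = 0) ∧ ∀ p ∈ S, fderiv ℂ V p (Zlin n m p) = 0 := by
  have hcomp := fun p hp => (fderiv_mulCoords_apply_Zlin_eq_iff
    (hU.differentiableAt (hS.mem_nhds hp)) (hV.differentiableAt (hS.mem_nhds hp)) n m).1
      (hpres p hp)
  refine ⟨fun p hp => (mul_eq_zero.1 (hcomp p hp).1).resolve_left (hS₁ p hp),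
    eq_of_continuousOn_of_snd_ne_zero hS ?_ fun p hp hp₂ =>
      (mul_eq_zero.1 (hcomp p hp).2).resolve_left hp₂⟩
  exact ((hV.contDiffOn_one_prod hS).continuousOn_fderiv_of_isOpen hS le_rfl).clm_apply
    (by unfold Zlin; fun_prop)

theorem exists_isOpen_injOn_mulCoords (hU : ContDiffAt ℂ 1 U 0) (hV : ContDiffAt ℂ 1 V 0)
    (hU0 : U 0 ≠ 0) (hV0 : V 0 ≠ 0) :
    ∃ W : Set (ℂ × ℂ), IsOpen W ∧ 0 ∈ W ∧ InjOn (fun q : ℂ × ℂ => (q.1 * U q, q.2 * V q)) W := by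
  let e : (ℂ × ℂ) ≃L[ℂ] ℂ × ℂ :=
    (ContinuousLinearEquiv.unitsEquivAut ℂ (Units.mk0 _ hU0)).prodCongr
      (ContinuousLinearEquiv.unitsEquivAut ℂ (Units.mk0 _ hV0))
  have h : HasStrictFDerivAt (fun q : ℂ × ℂ => (q.1 * U q, q.2 * V q))
      (e : (ℂ × ℂ) →L[ℂ] ℂ × ℂ) 0 := by
    refine ((hasStrictFDerivAt_fst.fun_mul (hU.hasStrictFDerivAt one_ne_zero)).prodMk
      (hasStrictFDerivAt_snd.fun_mul (hV.hasStrictFDerivAt one_ne_zero))).congr_fderiv ?_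
    ext <;> simp [e, mul_comm]
  exact ⟨_, (h.toOpenPartialHomeomorph _).open_source, h.mem_toOpenPartialHomeomorph_source,
    (h.toOpenPartialHomeomorph _).injOn⟩

end MulCoords

theorem preserving_map_extends_general (n m : ℕ) (hn : 0 < n) (hm : 0 < m)
    (ε : ℝ) (hε : 0 < ε) (u v : ℂ × ℂ → ℂ)
    (Ω : Set (ℂ × ℂ))
    (hΩ : Ω = (ball (0 : ℂ) ε ×ˢ ball (0 : ℂ) ε) \ {p : ℂ × ℂ | p.1 = 0})
    (hu : DifferentiableOn ℂ u Ω) (hv : DifferentiableOn ℂ v Ω)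
    (hu0 : ∀ p ∈ Ω, u p ≠ 0) (hv0 : ∀ p ∈ Ω, v p ≠ 0)
    (G : ℂ × ℂ → ℂ × ℂ) (hG : ∀ p, G p = (p.1 * u p, p.2 * v p))
    (hpres : ∀ p ∈ Ω, fderiv ℂ G p (Zlin n m p) = Zlin n m (G p)) :
    (∀ p ∈ Ω,
      (n : ℂ) * p.1 * fderiv ℂ u p (1, 0) - (m : ℂ) * p.2 * fderiv ℂ u p (0, 1) = 0 ∧
      (n : ℂ) * p.1 * fderiv ℂ v p (1, 0) - (m : ℂ) * p.2 * fderiv ℂ v p (0, 1) = 0) ∧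
    ∃ U V : ℂ × ℂ → ℂ,
      DifferentiableOn ℂ U (ball (0 : ℂ) ε ×ˢ ball (0 : ℂ) ε) ∧
      DifferentiableOn ℂ V (ball (0 : ℂ) ε ×ˢ ball (0 : ℂ) ε) ∧
      (∀ p ∈ Ω, U p = u p ∧ V p = v p) ∧
      ∃ W : Set (ℂ × ℂ), IsOpen W ∧ (0 : ℂ × ℂ) ∈ W ∧
        W ⊆ ball (0 : ℂ) ε ×ˢ ball (0 : ℂ) ε ∧
        Set.InjOn (fun p : ℂ × ℂ => (p.1 * U p, p.2 * V p)) W ∧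
        ∀ p ∈ W, fderiv ℂ (fun p : ℂ × ℂ => (p.1 * U p, p.2 * V p)) p (Zlin n m p) =
          Zlin n m (p.1 * U p, p.2 * V p) := by
  subst hΩ
  obtain rfl : G = _ := funext hG
  have hD : IsOpen (𝔻 ε) := isOpen_ball.prod isOpen_ball
  have h0 : (0 : ℂ × ℂ) ∈ 𝔻 ε := ⟨mem_ball_self hε, mem_ball_self hε⟩
  obtain ⟨huZ, hvZ⟩ := fderiv_apply_Zlin_eq_zero_of_preserves (isOpen_bidisk_diff_axis ε)
    (fun p hp => hp.2) hu hv hpres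
  obtain ⟨U, hU, hUu, hUZ, p, hp, hU0⟩ :=
    exists_extension_of_fderiv_apply_Zlin_eq_zero hn hm hε hu huZ
  obtain ⟨V, hV, hVv, hVZ, q, hq, hV0⟩ :=
    exists_extension_of_fderiv_apply_Zlin_eq_zero hn hm hε hv hvZ
  obtain ⟨W, hWo, hW0, hWinj⟩ := exists_isOpen_injOn_mulCoords
    ((hU.contDiffOn_one_prod hD).contDiffAt (hD.mem_nhds h0))
    ((hV.contDiffOn_one_prod hD).contDiffAt (hD.mem_nhds h0))
    (hU0 ▸ hu0 p hp) (hV0 ▸ hv0 q hq)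
  refine ⟨fun p hp => ⟨?_, ?_⟩, U, V, hU, hV, fun p hp => ⟨hUu p hp, hVv p hp⟩,
    W ∩ 𝔻 ε, hWo.inter hD, ⟨hW0, h0⟩, inter_subset_right, hWinj.mono inter_subset_left,
    fun p hp => ?_⟩
  · rw [← ContinuousLinearMap.apply_Zlin, huZ p hp]
  · rw [← ContinuousLinearMap.apply_Zlin, hvZ p hp]
  · exact (fderiv_mulCoords_apply_Zlin_eq_iff (hU.differentiableAt (hD.mem_nhds hp.2))
      (hV.differentiableAt (hD.mem_nhds hp.2)) n m).2
      ⟨by rw [hUZ p hp.2, mul_zero], by rw [hVZ p hp.2, mul_zero]⟩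

/-- A map `G = (x·u, y·v)`, with `u, v` holomorphic and nonvanishing on a
punctured neighborhood of `0` minus the axis `{x = 0}`, preserving
`Z₁ = n x ∂/∂x − m y ∂/∂y`, satisfies `n x u_x − m y u_y = 0` and
`n x v_x − m y v_y = 0`; consequently `u, v` extend holomorphically across
`{x = 0}` and `G` extends to a biholomorphism of a neighborhood of `0`
preserving `Z₁`. -/
theorem preserving_map_extends (n m : ℕ) (hn : 0 < n) (hm : 0 < m)
    (ε : ℝ) (hε : 0 < ε) (u v : ℂ × ℂ → ℂ)
    (Ω : Set (ℂ × ℂ))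
    (hΩ : Ω = (ball (0 : ℂ) ε ×ˢ ball (0 : ℂ) ε) \ {p : ℂ × ℂ | p.1 = 0})
    (hu : DifferentiableOn ℂ u Ω) (hv : DifferentiableOn ℂ v Ω)
    (hu0 : ∀ p ∈ Ω, u p ≠ 0) (hv0 : ∀ p ∈ Ω, v p ≠ 0)
    (G : ℂ × ℂ → ℂ × ℂ) (hG : ∀ p, G p = (p.1 * u p, p.2 * v p))
    (hinj : Set.InjOn G Ω)
    (hpres : ∀ p ∈ Ω, fderiv ℂ G p (Zlin n m p) = Zlin n m (G p)) :
    (∀ p ∈ Ω,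
      (n : ℂ) * p.1 * fderiv ℂ u p (1, 0) - (m : ℂ) * p.2 * fderiv ℂ u p (0, 1) = 0 ∧
      (n : ℂ) * p.1 * fderiv ℂ v p (1, 0) - (m : ℂ) * p.2 * fderiv ℂ v p (0, 1) = 0) ∧
    ∃ U V : ℂ × ℂ → ℂ,
      DifferentiableOn ℂ U (ball (0 : ℂ) ε ×ˢ ball (0 : ℂ) ε) ∧
      DifferentiableOn ℂ V (ball (0 : ℂ) ε ×ˢ ball (0 : ℂ) ε) ∧
      (∀ p ∈ Ω, U p = u p ∧ V p = v p) ∧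
      ∃ W : Set (ℂ × ℂ), IsOpen W ∧ (0 : ℂ × ℂ) ∈ W ∧
        W ⊆ ball (0 : ℂ) ε ×ˢ ball (0 : ℂ) ε ∧
        Set.InjOn (fun p : ℂ × ℂ => (p.1 * U p, p.2 * V p)) W ∧
        ∀ p ∈ W, fderiv ℂ (fun p : ℂ × ℂ => (p.1 * U p, p.2 * V p)) p (Zlin n m p) =
          Zlin n m (p.1 * U p, p.2 * V p) :=
  preserving_map_extends_general n m hn hm ε hε u v Ω hΩ hu hv hu0 hv0 G hG hpres
end
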